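/- Let U ∈ ℝ^{m×k} have orthonormal columns, S ∈ ℝ^{d×m}, and suppose SU has rank k. Let T ∈ ℝ^{k×k} be invertible and set Mᵖ = U T. If S Mᵖ has orthonormal columns, then for every i ∈ {1,…,k}, the i-th largest singular value of Mᵖ equals the reciprocal of the (k−i+1)-th largest singular value of SU: σ_i(Mᵖ) = 1/σ_{k−i+1}(SU). -/

import Mathlib

/-!
As `U` has orthonormal columns, the Gram matrix of `U T` is `Tᵀ T`, while orthonormality of
the columns of `S U T` says `Tᵀ G T = 1` for the Gram matrix `G` of `S U`. Hence `G⁻¹ = T Tᵀ`,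
which has the same characteristic polynomial as `Tᵀ T`: the squared singular values of `U T`
are the inverses of those of `S U`, and inversion reverses their order.
-/

open Matrix BigOperators

noncomputable def sval {m n : ℕ} (A : Matrix (Fin m) (Fin n) ℝ) (j : Fin n) : ℝ :=
  Real.sqrt ((Matrix.isHermitian_conjTranspose_mul_self A : (Aᵀ * A).IsHermitian).eigenvalues
    (Tuple.sort (Matrix.isHermitian_conjTranspose_mul_self A : (Aᵀ * A).IsHermitian).eigenvalues j.rev))

noncomputable def specNorm {m n : ℕ} (A : Matrix (Fin m) (Fin n) ℝ) : ℝ :=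
  sSup (Set.range (sval A))

noncomputable def sMin {m n : ℕ} (A : Matrix (Fin m) (Fin n) ℝ) : ℝ :=
  sInf (Set.range (sval A))

noncomputable def frob {m n : ℕ} (A : Matrix (Fin m) (Fin n) ℝ) : ℝ :=
  Real.sqrt (∑ i, ∑ j, (A i j)^2)

noncomputable def enorm {m : ℕ} (x : Fin m → ℝ) : ℝ := Real.sqrt (∑ i, (x i)^2)

def UpperTri {k n : ℕ} (R : Matrix (Fin k) (Fin n) ℝ) : Prop :=
  ∀ (i : Fin k) (j : Fin n), (j : ℕ) < (i : ℕ) → R i j = 0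

def lead {k n : ℕ} (R : Matrix (Fin k) (Fin n) ℝ) (ℓ : ℕ) (h1 : ℓ ≤ k) (h2 : ℓ ≤ n) :
    Matrix (Fin ℓ) (Fin ℓ) ℝ := fun i j => R (Fin.castLE h1 i) (Fin.castLE h2 j)

def topRight {k n : ℕ} (R : Matrix (Fin k) (Fin n) ℝ) (ℓ : ℕ) (h1 : ℓ ≤ k) :
    Matrix (Fin ℓ) (Fin (n - ℓ)) ℝ :=
  fun i j => R (Fin.castLE h1 i) ⟨ℓ + j.1, by have := j.isLt; omega⟩

def trail {k n : ℕ} (R : Matrix (Fin k) (Fin n) ℝ) (ℓ : ℕ) :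
    Matrix (Fin (k - ℓ)) (Fin (n - ℓ)) ℝ :=
  fun i j => R ⟨ℓ + i.1, by have := i.isLt; omega⟩ ⟨ℓ + j.1, by have := j.isLt; omega⟩

open Polynomial

namespace Tuple

theorem eq_comp_sort_of_monotone {α : Type*} [LinearOrder α] {n : ℕ} {f g : Fin n → α}
    (hg : Monotone g) (h : Finset.univ.val.map g = Finset.univ.val.map f) : g = f ∘ sort f := by
  have hsort : Finset.univ.val.map (f ∘ sort f) = Finset.univ.val.map f := by
    rw [← Multiset.map_map, Multiset.map_univ_val_equiv]
  rw [← hsort, Fin.univ_val_map, Fin.univ_val_map] at h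
  exact List.ofFn_injective <| List.Perm.eq_of_sortedLE hg.sortedLE_ofFn
    (monotone_sort f).sortedLE_ofFn (Multiset.coe_eq_coe.mp h)

theorem comp_sort_eq_inv_comp_sort_rev {n : ℕ} {f g : Fin n → ℝ} (hg : ∀ i, 0 < g i)
    (h : Finset.univ.val.map f = Finset.univ.val.map (fun i => (g i)⁻¹)) :
    f ∘ sort f = fun j => (g (sort g j.rev))⁻¹ := by
  refine (eq_comp_sort_of_monotone (fun a b hab => ?_) ?_).symm
  · exact inv_anti₀ (hg _) (monotone_sort g (Fin.rev_le_rev.mpr hab))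
  · have hcomp : (fun j => (g (sort g j.rev))⁻¹) =
        ((fun i => (g i)⁻¹) ∘ sort g) ∘ Fin.revPerm := rfl
    rw [h, hcomp, ← Multiset.map_map, Multiset.map_univ_val_equiv, ← Multiset.map_map,
      Multiset.map_univ_val_equiv]

end Tuple

namespace Matrix

variable {n 𝕜 : Type*} [Fintype n] [DecidableEq n] [RCLike 𝕜]

theorem IsHermitian.charpoly_inv {A : Matrix n n 𝕜} (hA : A.IsHermitian) (hA₀ : IsUnit A) :
    A⁻¹.charpoly = ∏ i, (X - C (((hA.eigenvalues i)⁻¹ : ℝ) : 𝕜)) := by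
  rw [nonsing_inv_eq_ringInverse, ← cfc_ringInverse_id (R := ℝ) A hA₀ hA.isSelfAdjoint,
    hA.charpoly_cfc_eq]

theorem IsHermitian.eigenvalues_map_eq_inv_of_charpoly_eq {A B : Matrix n n 𝕜}
    (hA : A.IsHermitian) (hB : B.IsHermitian) (hB₀ : IsUnit B)
    (h : A.charpoly = B⁻¹.charpoly) :
    Finset.univ.val.map hA.eigenvalues = Finset.univ.val.map (fun i => (hB.eigenvalues i)⁻¹) := by
  have roots_re (f : n → ℝ) :
      (∏ i, (X - C (f i : 𝕜))).roots.map RCLike.re = Finset.univ.val.map f := by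
    rw [roots_prod _ _ (Finset.prod_ne_zero_iff.mpr fun i _ => X_sub_C_ne_zero _)]
    simp
  rw [← roots_re, ← roots_re, ← hA.charpoly_eq, ← hB.charpoly_inv hB₀, h]

theorem mul_conjTranspose_mul_eq_one {B T : Matrix n n 𝕜} (h : Tᴴ * B * T = 1) :
    T * Tᴴ * B = 1 := by
  rw [Matrix.mul_assoc]
  exact mul_eq_one_comm.mp h

theorem isUnit_of_conjTranspose_mul_mul_eq_one {B T : Matrix n n 𝕜} (h : Tᴴ * B * T = 1) :
    IsUnit B :=
  (isUnit_iff_isUnit_det B).mpr (isUnit_det_of_left_inverse (mul_conjTranspose_mul_eq_one h))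

theorem IsHermitian.eigenvalues_map_eq_inv_of_conjTranspose_mul_mul_eq_one
    {A B T : Matrix n n 𝕜} (hA : A.IsHermitian) (hB : B.IsHermitian) (hA_eq : A = Tᴴ * T)
    (h : Tᴴ * B * T = 1) :
    Finset.univ.val.map hA.eigenvalues = Finset.univ.val.map (fun i => (hB.eigenvalues i)⁻¹) := by
  apply hA.eigenvalues_map_eq_inv_of_charpoly_eq hB (isUnit_of_conjTranspose_mul_mul_eq_one h)
  rw [hA_eq, inv_eq_left_inv (mul_conjTranspose_mul_eq_one h), charpoly_mul_comm]

end Matrix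

theorem precond_singular_values_general {m d k : ℕ}
    (U : Matrix (Fin m) (Fin k) ℝ) (hU : Uᵀ * U = 1)
    (S : Matrix (Fin d) (Fin m) ℝ)
    (T : Matrix (Fin k) (Fin k) ℝ)
    (hOrth : (S * (U * T))ᵀ * (S * (U * T)) = 1) :
    ∀ i : Fin k, sval (U * T) i = (sval (S * U) i.rev)⁻¹ := by
  intro i
  have hgram : (U * T)ᴴ * (U * T) = Tᴴ * T := by
    simp only [conjTranspose_eq_transpose_of_trivial, transpose_mul, Matrix.mul_assoc,
      ← Matrix.mul_assoc Uᵀ U T, hU, one_mul]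
  have hconj : Tᴴ * ((S * U)ᴴ * (S * U)) * T = 1 := by
    simpa only [conjTranspose_eq_transpose_of_trivial, transpose_mul, Matrix.mul_assoc]
      using hOrth
  have hpos : ((S * U)ᴴ * (S * U)).PosDef :=
    (posSemidef_conjTranspose_mul_self _).posDef_iff_isUnit.mpr
      (isUnit_of_conjTranspose_mul_mul_eq_one hconj)
  have hmap := IsHermitian.eigenvalues_map_eq_inv_of_conjTranspose_mul_mul_eq_one
    (isHermitian_conjTranspose_mul_self (U * T)) hpos.1 hgram hconj
  have hsorted := congrFun (Tuple.comp_sort_eq_inv_comp_sort_rev hpos.eigenvalues_pos hmap) i.rev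
  unfold sval
  rw [Function.comp_apply] at hsorted
  rw [hsorted, Real.sqrt_inv, Fin.rev_rev]

theorem precond_singular_values {m d k : ℕ}
    (U : Matrix (Fin m) (Fin k) ℝ) (hU : Uᵀ * U = 1)
    (S : Matrix (Fin d) (Fin m) ℝ) (hrk : (S * U).rank = k)
    (T : Matrix (Fin k) (Fin k) ℝ) (hT : IsUnit T.det)
    (hOrth : (S * (U * T))ᵀ * (S * (U * T)) = 1) :
    ∀ i : Fin k, sval (U * T) i = (sval (S * U) i.rev)⁻¹ :=
  precond_singular_values_general U hU S T hOrth
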